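/- Let $C$ be an algebraically closed perfectoid field of characteristic $0$ containing $\mathbb{Q}_p$, with ring of integers $\mathcal{O}_C$, tilt $C^\flat$ with valuation $\nu$ normalized by $\nu(\varpi) = 1$ for $\varpi = (p, p^{1/p}, \dots)$, and let $\epsilon = (1, \zeta_p, \zeta_{p^2}, \dots) \in C^\flat$ be given by a compatible system of primitive $p$-power roots of unity. Write $u = [\epsilon^{1/p}] - 1 = \sum_{n \geq 0} [u_n] p^n$ in $A_{inf} = W(\mathcal{O}_C^\flat)$. Then $u_0 = \epsilon^{1/p} - 1$ and $\nu(u_n) \geq \frac{1}{p^n(p-1)}$ for all $n \geq 0$. -/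

import Mathlib

/-!
Write `x = [ε^{1/p}] - 1`. Since `p = VF` in characteristic `p`, the term `pⁱ[uᵢ]` is the Witt
vector whose only nonzero coefficient is `uᵢ^{pⁱ}`, in position `i`; so the Teichmüller expansion
forces `uₙ^{pⁿ} = x.coeff n`, i.e. `pⁿ • v(uₙ) = v(x.coeff n)`. Every Witt coefficient of
`[X] - 1` over `ℤ[X]` vanishes at `X = 1`, hence is divisible by `X - 1`; so each coefficient of
`x` has valuation at least `v(ε^{1/p} - 1) = 1/(p-1)`.
-/

open WittVector Polynomial

/-- The compatible `p^n`-th root `x^{1/p^n}` of an element of a perfect ring of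
characteristic `p`, given by iterating the inverse of the Frobenius equivalence. -/
noncomputable def pRoot (p : ℕ) {R : Type*} [CommRing R] [Fact p.Prime] [CharP R p]
    [PerfectRing R p] (n : ℕ) (x : R) : R :=
  (⇑(frobeniusEquiv R p).symm)^[n] x

namespace WittVector

variable {p : ℕ} [Fact p.Prime]

theorem sub_one_dvd_coeff_teichmuller_sub_one {A : Type*} [CommRing A] (a : A) (k : ℕ) :
    a - 1 ∣ (teichmuller p a - 1).coeff k := by
  have hX : X - C 1 ∣ (teichmuller p (X : ℤ[X]) - 1).coeff k := by
    rw [dvd_iff_isRoot, IsRoot, ← coe_evalRingHom, ← map_coeff, map_sub, map_one,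
      map_teichmuller]
    simp
  simpa [← map_coeff, map_teichmuller] using map_dvd (aeval a).toRingHom hX

theorem le_valuation_coeff_teichmuller_sub_one {R Γ₀ : Type*} [CommRing R]
    [LinearOrderedAddCommGroupWithTop Γ₀] (v : AddValuation R Γ₀) {a : R} (ha : 0 ≤ v a)
    (k : ℕ) : v (a - 1) ≤ v ((teichmuller p a - 1).coeff k) := by
  obtain ⟨c, hc⟩ :=
    sub_one_dvd_coeff_teichmuller_sub_one (p := p) (⟨a, ha⟩ : Valuation.integer v) k
  have hc' : (teichmuller p a - 1).coeff k = (a - 1) * c := by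
    simpa [← map_coeff, map_teichmuller] using congrArg (Valuation.integer v).subtype hc
  rw [hc', v.map_mul]
  exact le_add_of_nonneg_right c.2

variable {R : Type*} [CommRing R] [CharP R p]

theorem coeff_sum_pow_mul_teichmuller (u : ℕ → R) {n N : ℕ} (h : n < N) :
    (∑ i ∈ Finset.range N, (p : WittVector p R) ^ i * teichmuller p (u i)).coeff n =
      u n ^ p ^ n := by
  simp_rw [mul_comm _ (teichmuller p _)]
  rw [sum_coeff_eq_coeff_sum, Finset.sum_eq_single n, teichmuller_mul_pow_coeff]
  · exact fun i _ hi => teichmuller_mul_pow_coeff_of_ne _ (Ne.symm hi)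
  · exact fun hn => absurd (Finset.mem_range.2 h) hn
  · refine fun m => ⟨fun ⟨i, _, hi⟩ ⟨j, _, hj⟩ => Subtype.ext ?_⟩
    exact (not_imp_comm.1 (teichmuller_mul_pow_coeff_of_ne _) hi).symm.trans
      (not_imp_comm.1 (teichmuller_mul_pow_coeff_of_ne _) hj)

theorem pow_eq_coeff_of_truncate_eq_sum {x : WittVector p R} {u : ℕ → R}
    (hu : ∀ N, truncate N x =
      truncate N (∑ i ∈ Finset.range N, (p : WittVector p R) ^ i * teichmuller p (u i)))
    (n : ℕ) : u n ^ p ^ n = x.coeff n := by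
  have h := congrArg (TruncatedWittVector.coeff (Fin.last n)) (hu (n + 1))
  simp only [coeff_truncate, Fin.val_last] at h
  rw [h, coeff_sum_pow_mul_teichmuller u n.lt_succ_self]

end WittVector

theorem WithTop.coe_le_of_nsmul_le_nsmul {α : Type*} [AddMonoid α] [LinearOrder α]
    [AddLeftStrictMono α] [AddRightStrictMono α] {m : ℕ} (hm : m ≠ 0) {a : α}
    {t : WithTop α} (h : m • (a : WithTop α) ≤ m • t) : (a : WithTop α) ≤ t := by
  induction t using WithTop.recTopCoe with
  | top => exact le_top
  | coe b =>
    rw [← WithTop.coe_nsmul, ← WithTop.coe_nsmul, WithTop.coe_le_coe] at h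
    exact WithTop.coe_le_coe.2 ((nsmul_le_nsmul_iff_right hm).1 h)

/-- Let `𝒪_C^♭` be the tilt of the ring of integers of an algebraically
closed perfectoid field `C ⊇ ℚ_p`: a perfect ring `R` of characteristic `p`, with the
additive valuation `v` (normalized by `v(ϖ) = 1`, `ϖ = (p, p^{1/p}, …)`), and let
`ε = (1, ζ_p, ζ_{p²}, …) ∈ R` be given by a compatible system of primitive `p`-power
roots of unity, so that `v(ε^{1/pⁿ} - 1) = 1/(p^{n-1}(p-1))` for `n ≥ 1`.
Write `u = [ε^{1/p}] - 1 = ∑_{n ≥ 0} [u n] pⁿ` in `A_inf = W(R)` (the Teichmüller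
expansion, characterized by agreement of all truncations with the partial sums).
Then `u 0 = ε^{1/p} - 1` and `v (u n) ≥ 1/(pⁿ(p-1))` for all `n ≥ 0`. -/
theorem stmt6 (p : ℕ) [Fact p.Prime] (R : Type*) [CommRing R] [CharP R p] [PerfectRing R p]
    (v : AddValuation R (WithTop ℝ)) (ε : R)
    (hε : ∀ n : ℕ, v (pRoot p (n + 1) ε - 1) =
      ((1 / (p ^ n * (p - 1)) : ℝ) : WithTop ℝ))
    (u : ℕ → R)
    (hu : ∀ N : ℕ,
      WittVector.truncate N (teichmuller p (pRoot p 1 ε) - 1) =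
        WittVector.truncate N
          (∑ i ∈ Finset.range N, (p : WittVector p R) ^ i * teichmuller p (u i))) :
    u 0 = pRoot p 1 ε - 1 ∧
      ∀ n : ℕ, ((1 / (p ^ n * (p - 1)) : ℝ) : WithTop ℝ) ≤ v (u n) := by
  set a := pRoot p 1 ε
  have hp : (1 : ℝ) < p := by exact_mod_cast (Fact.out : p.Prime).one_lt
  have hva : v (a - 1) = ((1 / (p - 1) : ℝ) : WithTop ℝ) := by simpa using hε 0
  have ha : 0 ≤ v a := by
    have h : (0 : WithTop ℝ) ≤ v (a - 1) :=
      hva ▸ WithTop.coe_nonneg.2 (one_div_nonneg.2 (sub_nonneg.2 hp.le))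
    simpa using v.map_le_add h v.map_one.symm.le
  have hcoeff := pow_eq_coeff_of_truncate_eq_sum hu
  refine ⟨?_, fun n => ?_⟩
  · rw [← pow_one (u 0), ← pow_zero p, hcoeff 0, ← WittVector.constantCoeff_apply, map_sub,
      map_one, WittVector.constantCoeff_apply, teichmuller_coeff_zero]
  · refine WithTop.coe_le_of_nsmul_le_nsmul (pow_ne_zero n (Fact.out : p.Prime).ne_zero) ?_
    have hscale : (p ^ n • (1 / (p ^ n * (p - 1)) : ℝ)) = 1 / (p - 1) := by
      rw [nsmul_eq_mul]; push_cast; field_simp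
    rw [← v.map_pow, hcoeff n, ← WithTop.coe_nsmul, hscale, ← hva]
    exact le_valuation_coeff_teichmuller_sub_one v ha n
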